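/- In a half-full tree with l leaves, the number of primary roots equals the number of ones in the binary representation of l. -/

import Mathlib

inductive BTree : Type
  | leaf : BTree
  | node : BTree → BTree → BTree
deriving DecidableEq

namespace BTree

/-- Number of leaves of a binary tree. -/
def leaves : BTree → ℕ
  | leaf => 1
  | node l r => leaves l + leaves r

/-- Depth (height) of a binary tree. -/
def depth : BTree → ℕ
  | leaf => 0
  | node l r => max (depth l) (depth r) + 1

/-- Number of internal (non-leaf) nodes. -/
def internals : BTree → ℕ
  | leaf => 0
  | node l r => internals l + internals r + 1

/-- A complete binary tree: full, with all leaves at the same depth. -/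
def IsComplete : BTree → Prop
  | leaf => True
  | node l r => IsComplete l ∧ IsComplete r ∧ depth l = depth r

/-- A half-full tree (haft): every non-leaf node has two children, and its
left child is the root of a complete subtree containing at least half of the
node's leaf-descendants. -/
def IsHaft : BTree → Prop
  | leaf => True
  | node l r => IsComplete l ∧ leaves r ≤ leaves l ∧ IsHaft r

end BTree

namespace BTree

/-- Boolean test for completeness. -/
def completeB : BTree → Bool
  | leaf => true
  | node l r => completeB l && completeB r && (depth l == depth r)

/-- Number of primary roots: nodes rooting a complete subtree whose parent
does not root a complete subtree. -/
def countPR : BTree → ℕ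
  | leaf => 1
  | node l r => if completeB (node l r) then 1 else countPR l + countPR r

end BTree


/-!
In a haft `node l r` the left child is complete, so it has `2 ^ a` leaves and a single primary
root, while the right child is again a haft with at most `2 ^ a` leaves. If the right child has
exactly `2 ^ a` leaves it is complete as well (a haft whose leaf count is a power of two is
complete), the whole tree is one primary root and `2 ^ (a + 1)` has one binary one. Otherwise
the right child has fewer than `2 ^ a` leaves, so adding `2 ^ a` sets one new leading bit, and the
count follows by induction along the right spine.
-/

namespace Nat

theorem count_true_bits_eq_mod_add_div (n : ℕ) :
    n.bits.count true = n % 2 + (n / 2).bits.count true := by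
  rcases Nat.even_or_odd' n with ⟨k, rfl | rfl⟩
  · rcases eq_or_ne k 0 with rfl | hk
    · simp
    · simp [bit0_bits k hk]
  · have : (2 * k + 1) / 2 = k := by omega
    rw [bit1_bits, List.count_cons_self, this]
    omega

theorem count_true_bits_two_pow_add {d m : ℕ} (h : m < 2 ^ d) :
    (2 ^ d + m).bits.count true = m.bits.count true + 1 := by
  induction d generalizing m with
  | zero =>
    obtain rfl : m = 0 := by simpa using h
    simp
  | succ d ih =>
    have hm : m / 2 < 2 ^ d := by rw [pow_succ] at h; omega
    have hdiv : (2 ^ (d + 1) + m) / 2 = 2 ^ d + m / 2 := by rw [pow_succ]; omega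
    have hmod : (2 ^ (d + 1) + m) % 2 = m % 2 := by rw [pow_succ]; omega
    rw [count_true_bits_eq_mod_add_div, hdiv, hmod, ih hm, count_true_bits_eq_mod_add_div m,
      add_assoc]

theorem count_true_bits_two_pow (d : ℕ) : (2 ^ d).bits.count true = 1 := by
  simpa using count_true_bits_two_pow_add (Nat.two_pow_pos d)

theorem eq_two_pow_of_two_pow_add_eq_two_pow {a k r : ℕ} (hr0 : 0 < r) (hr : r ≤ 2 ^ a)
    (h : 2 ^ a + r = 2 ^ k) : r = 2 ^ a := by
  have hak : a < k := (pow_lt_pow_iff_right₀ one_lt_two).mp (by omega : 2 ^ a < 2 ^ k)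
  have hka : k ≤ a + 1 := (pow_le_pow_iff_right₀ one_lt_two).mp
    (by rw [pow_succ]; omega : 2 ^ k ≤ 2 ^ (a + 1))
  obtain rfl : k = a + 1 := by omega
  rw [pow_succ] at h
  omega

end Nat

namespace BTree

theorem leaves_pos (t : BTree) : 0 < t.leaves := by
  induction t with
  | leaf => exact Nat.one_pos
  | node l r ihl _ => exact Nat.add_pos_left ihl _

theorem completeB_iff (t : BTree) : t.completeB = true ↔ t.IsComplete := by
  induction t with
  | leaf => simp [completeB, IsComplete]
  | node l r ihl ihr => simp [completeB, IsComplete, ihl, ihr, and_assoc]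

theorem IsComplete.leaves_eq {t : BTree} (h : t.IsComplete) : t.leaves = 2 ^ t.depth := by
  induction t with
  | leaf => rfl
  | node l r ihl ihr =>
    obtain ⟨hl, hr, hd⟩ := h
    rw [leaves, depth, ihl hl, ihr hr, hd, max_self, pow_succ, mul_two]

theorem IsComplete.countPR_eq_one {t : BTree} (h : t.IsComplete) : t.countPR = 1 := by
  cases t with
  | leaf => rfl
  | node l r => rw [countPR, if_pos ((completeB_iff _).mpr h)]

theorem countPR_node_of_not_isComplete {l r : BTree} (h : ¬(node l r).IsComplete) :
    (node l r).countPR = l.countPR + r.countPR := by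
  rw [countPR, if_neg (mt (completeB_iff _).mp h)]

theorem isComplete_node {l r : BTree} (hl : l.IsComplete) (hr : r.IsComplete)
    (h : l.leaves = r.leaves) : (node l r).IsComplete := by
  refine ⟨hl, hr, Nat.pow_right_injective le_rfl ?_⟩
  simp only [← hl.leaves_eq, ← hr.leaves_eq, h]

theorem IsHaft.isComplete_of_leaves_eq_two_pow {t : BTree} (ht : t.IsHaft) {k : ℕ}
    (hk : t.leaves = 2 ^ k) : t.IsComplete := by
  induction t generalizing k with
  | leaf => trivial
  | node l r _ ihr =>
    obtain ⟨hl, hle, hr⟩ := ht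
    rw [hl.leaves_eq] at hle
    rw [leaves, hl.leaves_eq] at hk
    have hrl : r.leaves = 2 ^ l.depth :=
      Nat.eq_two_pow_of_two_pow_add_eq_two_pow r.leaves_pos hle hk
    exact isComplete_node hl (ihr hr hrl) (hl.leaves_eq.trans hrl.symm)

end BTree

/-- In a half-full tree with `l` leaves, the number of primary roots equals
the number of ones in the binary representation of `l`. -/
theorem haft_countPR (t : BTree) (ht : t.IsHaft) :
    t.countPR = (Nat.bits t.leaves).count true := by
  induction t with
  | leaf => simp [BTree.countPR, BTree.leaves]
  | node l r _ ihr =>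
    obtain ⟨hl, hle, hr⟩ := ht
    by_cases hc : (BTree.node l r).IsComplete
    · rw [hc.countPR_eq_one, hc.leaves_eq, Nat.count_true_bits_two_pow]
    · have hne : r.leaves ≠ l.leaves := fun h =>
        hc (BTree.isComplete_node hl (hr.isComplete_of_leaves_eq_two_pow (h.trans hl.leaves_eq))
          h.symm)
      have hlt : r.leaves < 2 ^ l.depth := hl.leaves_eq ▸ lt_of_le_of_ne hle hne
      rw [BTree.countPR_node_of_not_isComplete hc, hl.countPR_eq_one, ihr hr, BTree.leaves,
        hl.leaves_eq, Nat.count_true_bits_two_pow_add hlt, add_comm]
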